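/- arXiv:2209.04438 — 8 statements merged into one kernel-verified Lean document; each statement's English description precedes it below -/
import Mathlib

section
/- For every finite connected simple graph G, the Chartrand–Erwin–Johns–Zhang boundary of G is contained in the Steinerberger boundary of G, i.e. (∂G)' ⊆ ∂G. -/
open Finset

variable {V : Type*}

/-- The Steinerberger boundary of a graph: vertices `v` for which some witness `u` makes the
average distance of the neighbors of `v` to `u` strictly smaller than `d(v,u)`; by convention
all vertices are boundary vertices when the graph has a single vertex. -/
def sBoundary (G : SimpleGraph V) [Fintype V] [DecidableRel G.Adj] : Set V :=
  if Fintype.card V = 1 then Set.univ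
  else {v | ∃ u : V, ∑ w ∈ G.neighborFinset v, G.dist w u < G.degree v * G.dist v u}

/-- The Chartrand–Erwin–Johns–Zhang boundary of a graph. -/
def cBoundary (G : SimpleGraph V) : Set V :=
  {v | ∃ u : V, ∀ w : V, G.Adj v w → G.dist w u ≤ G.dist v u}

/-! If `u` witnesses `v ∈ (∂G)'`, every neighbor of `v` is at most as far from `u` as `v` is, and
the first step of a geodesic from `v` to `u` is strictly closer; summing over the neighbors gives
the strict inequality defining `∂G`. The witness cannot be `v` itself as soon as `v` has a
neighbor, which connectivity provides once `G` has two vertices. -/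

namespace SimpleGraph

variable {G : SimpleGraph V} {u v : V}

theorem Reachable.exists_adj_dist_lt (h : G.Reachable v u) (hne : v ≠ u) :
    ∃ w, G.Adj v w ∧ G.dist w u < G.dist v u := by
  obtain ⟨p, hp⟩ := h.exists_walk_length_eq_dist
  cases p with
  | nil => exact absurd rfl hne
  | cons hadj q =>
    refine ⟨_, hadj, ?_⟩
    have := G.dist_le q
    rw [Walk.length_cons] at hp
    omega

theorem Reachable.sum_dist_neighbor_lt [Fintype (G.neighborSet v)] (h : G.Reachable v u)
    (hne : v ≠ u) (hle : ∀ w, G.Adj v w → G.dist w u ≤ G.dist v u) :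
    ∑ w ∈ G.neighborFinset v, G.dist w u < G.degree v * G.dist v u := by
  obtain ⟨w, hvw, hlt⟩ := h.exists_adj_dist_lt hne
  calc ∑ w ∈ G.neighborFinset v, G.dist w u
      < ∑ _w ∈ G.neighborFinset v, G.dist v u :=
        sum_lt_sum (fun x hx ↦ hle x ((mem_neighborFinset G v x).mp hx))
          ⟨w, (mem_neighborFinset G v w).mpr hvw, hlt⟩
    _ = G.degree v * G.dist v u := by rw [sum_const, card_neighborFinset_eq_degree, smul_eq_mul]

end SimpleGraph

theorem cBoundary_subset_sBoundary [Fintype V] (G : SimpleGraph V) [DecidableRel G.Adj]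
    (hc : G.Connected) : cBoundary G ⊆ sBoundary G := by
  rintro v ⟨u, hu⟩
  unfold sBoundary
  split_ifs with hcard
  · trivial
  have : Nontrivial V := Fintype.one_lt_card_iff_nontrivial.mp <| by
    have := Fintype.card_pos_iff.mpr hc.nonempty
    omega
  obtain ⟨w, hvw⟩ := hc.preconnected.exists_adj_of_nontrivial v
  have hvu : v ≠ u := by
    rintro rfl
    simpa [SimpleGraph.dist_eq_one_iff_adj.mpr hvw.symm] using hu w hvw
  exact ⟨u, (hc v u).sum_dist_neighbor_lt hvu hu⟩
end

section
/- For any finite connected simple graph G with at least two vertices, the Steinerberger boundary ∂G has at least two elements; moreover, if |∂G| = 2 then G is a path graph. -/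
open Finset

variable {V : Type*}

/-- A graph is a path graph if it is isomorphic to the path graph `P_n` for some `n`. -/
def IsPathGraph (G : SimpleGraph V) : Prop :=
  ∃ n : ℕ, Nonempty (G ≃g SimpleGraph.pathGraph n)

section Aux

variable [Fintype V] (G : SimpleGraph V) [DecidableRel G.Adj]

/-- Any vertex `v ≠ u` has a neighbor strictly closer to `u`. -/
lemma aux_closer (hc : G.Connected) {v u : V} (h : v ≠ u) :
    ∃ w, G.Adj v w ∧ G.dist w u + 1 = G.dist v u := by
  obtain ⟨p, hp⟩ := hc.exists_walk_length_eq_dist v u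
  cases p with
  | nil => exact absurd rfl h
  | @cons _ w _ hadj q =>
    refine ⟨w, hadj, ?_⟩
    have h1 : G.dist w u ≤ q.length := SimpleGraph.dist_le q
    have h2 : G.dist v u ≤ G.dist v w + G.dist w u := hc.dist_triangle
    have h3 : G.dist v w = 1 := SimpleGraph.dist_eq_one_iff_adj.mpr hadj
    have h4 : q.length + 1 = G.dist v u := by
      simpa [SimpleGraph.Walk.length_cons] using hp
    omega

/-- A vertex at maximal distance from `u` belongs to the boundary. -/
lemma aux_farthest_mem (hc : G.Connected) (h1 : Fintype.card V ≠ 1) {v u : V}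
    (hne : v ≠ u) (hmax : ∀ z, G.dist z u ≤ G.dist v u) : v ∈ sBoundary G := by
  rw [sBoundary, if_neg h1]
  obtain ⟨w, hadj, hw⟩ := aux_closer G hc hne
  refine ⟨u, ?_⟩
  have hlt : ∑ w ∈ G.neighborFinset v, G.dist w u <
      ∑ _w ∈ G.neighborFinset v, G.dist v u := by
    refine Finset.sum_lt_sum (fun i _ => hmax i) ⟨w, ?_, by omega⟩
    rwa [SimpleGraph.mem_neighborFinset]
  simpa [Finset.sum_const, SimpleGraph.card_neighborFinset_eq_degree, mul_comm] using hlt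

/-- A non-boundary vertex has, for each `u ≠ v`, a neighbor strictly farther from `u`. -/
lemma aux_escape (hc : G.Connected) (h1 : Fintype.card V ≠ 1) {v : V}
    (hv : v ∉ sBoundary G) (u : V) (hvu : v ≠ u) :
    ∃ w, G.Adj v w ∧ G.dist w u = G.dist v u + 1 := by
  rw [sBoundary, if_neg h1] at hv
  have hge : ∀ u : V, G.degree v * G.dist v u ≤ ∑ w ∈ G.neighborFinset v, G.dist w u := by
    intro u
    by_contra hlt
    exact hv ⟨u, by omega⟩
  obtain ⟨w0, hadj0, hw0⟩ := aux_closer G hc hvu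
  by_contra hno
  push_neg at hno
  have hub : ∀ w ∈ G.neighborFinset v, G.dist w u ≤ G.dist v u := by
    intro w hw
    rw [SimpleGraph.mem_neighborFinset] at hw
    have h2 : G.dist w u ≤ G.dist w v + G.dist v u := hc.dist_triangle
    have h3 : G.dist w v = 1 := SimpleGraph.dist_eq_one_iff_adj.mpr hw.symm
    have h4 := hno w hw
    omega
  have hlt : ∑ w ∈ G.neighborFinset v, G.dist w u <
      ∑ _w ∈ G.neighborFinset v, G.dist v u := by
    refine Finset.sum_lt_sum hub ⟨w0, ?_, by omega⟩
    rwa [SimpleGraph.mem_neighborFinset]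
  have := hge u
  rw [Finset.sum_const, smul_eq_mul, SimpleGraph.card_neighborFinset_eq_degree] at hlt
  omega

/-- Escaping chains end at a boundary vertex, giving a distance inequality. -/
lemma aux_chain (hc : G.Connected) (h1 : Fintype.card V ≠ 1) (a b : V)
    (hB : sBoundary G = {a, b}) (u : V) :
    ∀ (s : ℕ) (v : V), univ.sup (fun z => G.dist z u) - G.dist v u ≤ s → v ≠ u →
      ∃ e, (e = a ∨ e = b) ∧ ∀ r, G.dist r v + G.dist v u ≤ G.dist r e + G.dist e u := by
  intro s
  induction s with
  | zero =>
    intro v hs hvu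
    by_cases hv : v = a ∨ v = b
    · exact ⟨v, hv, fun r => le_rfl⟩
    · push_neg at hv
      exfalso
      have hvB : v ∉ sBoundary G := by
        rw [hB]; simp [hv.1, hv.2]
      obtain ⟨w, hadj, hw⟩ := aux_escape G hc h1 hvB u hvu
      have hle : G.dist w u ≤ univ.sup (fun z => G.dist z u) :=
        Finset.le_sup (f := fun z => G.dist z u) (mem_univ w)
      have hle2 : G.dist v u ≤ univ.sup (fun z => G.dist z u) :=
        Finset.le_sup (f := fun z => G.dist z u) (mem_univ v)
      omega
  | succ n ih =>
    intro v hs hvu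
    by_cases hv : v = a ∨ v = b
    · exact ⟨v, hv, fun r => le_rfl⟩
    · push_neg at hv
      have hvB : v ∉ sBoundary G := by
        rw [hB]; simp [hv.1, hv.2]
      obtain ⟨w, hadj, hw⟩ := aux_escape G hc h1 hvB u hvu
      have hwu : w ≠ u := by
        intro h
        rw [h, SimpleGraph.dist_self] at hw
        omega
      have hle : G.dist w u ≤ univ.sup (fun z => G.dist z u) :=
        Finset.le_sup (f := fun z => G.dist z u) (mem_univ w)
      have hsw : univ.sup (fun z => G.dist z u) - G.dist w u ≤ n := by omega
      obtain ⟨e, he, hineq⟩ := ih w hsw hwu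
      refine ⟨e, he, fun r => ?_⟩
      have h2 : G.dist r v ≤ G.dist r w + G.dist w v := hc.dist_triangle
      have h3 : G.dist w v = 1 := SimpleGraph.dist_eq_one_iff_adj.mpr hadj.symm
      have h4 := hineq r
      omega

/-- Values below `G.dist a v` are attained as distances from `a`. -/
lemma aux_descend (hc : G.Connected) (a : V) :
    ∀ (n : ℕ) (v : V), G.dist a v = n → ∀ i ≤ n, ∃ w, G.dist a w = i := by
  intro n
  induction n with
  | zero =>
    intro v hv i hi
    interval_cases i
    exact ⟨v, hv⟩
  | succ n ih =>
    intro v hv i hi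
    rcases Nat.eq_or_lt_of_le hi with h | h
    · exact ⟨v, by omega⟩
    · have hva : v ≠ a := by
        intro h'
        rw [h', SimpleGraph.dist_self] at hv
        omega
      obtain ⟨w, hadj, hw⟩ := aux_closer G hc hva
      have hw' : G.dist a w = n := by
        rw [SimpleGraph.dist_comm] at hv ⊢
        omega
      exact ih w hw' i (by omega)

end Aux

theorem sBoundary_card_ge_two [Fintype V] (G : SimpleGraph V) [DecidableRel G.Adj]
    (hc : G.Connected) (h2 : 2 ≤ Fintype.card V) :
    2 ≤ (sBoundary G).ncard ∧ ((sBoundary G).ncard = 2 → IsPathGraph G) := by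
  have h1 : Fintype.card V ≠ 1 := by omega
  -- Part 1: at least two boundary vertices
  obtain ⟨x, y, hxy⟩ := Fintype.exists_pair_of_one_lt_card (α := V) (by omega)
  obtain ⟨p, -, hp⟩ := Finset.exists_max_image (univ : Finset (V × V))
    (fun q => G.dist q.1 q.2) ⟨(x, y), mem_univ _⟩
  set a := p.1 with ha
  set b := p.2 with hb
  have hmax : ∀ z w : V, G.dist z w ≤ G.dist a b := fun z w => hp (z, w) (mem_univ _)
  have hab : a ≠ b := by
    intro h
    have h0 : G.dist x y ≤ G.dist a b := hmax x y
    have : 0 < G.dist x y := hc.pos_dist_of_ne hxy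
    rw [h, SimpleGraph.dist_self] at h0
    omega
  have hbmem : b ∈ sBoundary G := by
    refine aux_farthest_mem G hc h1 (Ne.symm hab) fun z => ?_
    rw [SimpleGraph.dist_comm (u := b) (v := a)]
    exact hmax z a
  have hamem : a ∈ sBoundary G := by
    refine aux_farthest_mem G hc h1 hab fun z => ?_
    exact hmax z b
  have hsub : ({a, b} : Set V) ⊆ sBoundary G := by
    intro z hz
    rcases hz with h | h
    · rwa [h]
    · rw [Set.mem_singleton_iff] at h; rwa [h]
  have hge : 2 ≤ (sBoundary G).ncard := by
    calc 2 = ({a, b} : Set V).ncard := (Set.ncard_pair hab).symm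
      _ ≤ (sBoundary G).ncard := Set.ncard_le_ncard hsub (Set.toFinite _)
  refine ⟨hge, fun hcard => ?_⟩
  clear hamem hbmem hsub hmax hab ha hb hge
  -- Part 2: exactly two boundary vertices forces a path
  obtain ⟨a, b, hab, hB⟩ := Set.ncard_eq_two.mp hcard
  -- injectivity of distance from a
  have hinj : ∀ x y : V, G.dist a x = G.dist a y → x = y := by
    intro x y hdxy
    by_contra hne
    obtain ⟨e, he, hie⟩ := aux_chain G hc h1 a b hB y
      (univ.sup (fun z => G.dist z y) - G.dist x y) x le_rfl hne
    obtain ⟨e', he', hie'⟩ := aux_chain G hc h1 a b hB x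
      (univ.sup (fun z => G.dist z x) - G.dist y x) y le_rfl (Ne.symm hne)
    have hd : 0 < G.dist x y := hc.pos_dist_of_ne hne
    have hdc : G.dist y x = G.dist x y := SimpleGraph.dist_comm
    rcases he with he | he
    · have h5 := hie a
      rw [he] at h5
      simp only [SimpleGraph.dist_self, zero_add] at h5
      omega
    · have h5 := hie b
      rw [he] at h5
      simp only [SimpleGraph.dist_self, zero_add] at h5
      rcases he' with he' | he'
      · have h6 := hie' a
        rw [he'] at h6
        simp only [SimpleGraph.dist_self, zero_add] at h6
        omega
      · have h6 := hie' b
        rw [he'] at h6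
        simp only [SimpleGraph.dist_self, zero_add] at h6
        omega
  -- the level map
  set M := univ.sup (fun z => G.dist a z) with hM
  have hleM : ∀ v : V, G.dist a v ≤ M := fun v => Finset.le_sup (mem_univ v)
  obtain ⟨vm, -, hvm⟩ := Finset.exists_mem_eq_sup (univ : Finset V) ⟨a, mem_univ a⟩
    (fun z => G.dist a z)
  let f : V → Fin (M + 1) := fun v => ⟨G.dist a v, Nat.lt_succ_of_le (hleM v)⟩
  have hfinj : Function.Injective f := by
    intro x y hxy
    exact hinj x y (by simpa [f, Fin.ext_iff] using hxy)
  have hfsurj : Function.Surjective f := by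
    intro j
    have hj : (j : ℕ) ≤ M := Nat.lt_succ_iff.mp j.isLt
    obtain ⟨w, hw⟩ := aux_descend G hc a (G.dist a vm) vm rfl j (by omega)
    exact ⟨w, by simp [f, Fin.ext_iff, hw]⟩
  refine ⟨M + 1, ⟨⟨Equiv.ofBijective f ⟨hfinj, hfsurj⟩, ?_⟩⟩⟩
  intro x y
  simp only [Equiv.ofBijective_apply, SimpleGraph.pathGraph_adj]
  have key : ∀ x y : V, G.dist a x + 1 = G.dist a y → G.Adj x y := by
    intro x y h
    have hya : y ≠ a := by
      intro h'
      rw [h', SimpleGraph.dist_self] at h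
      omega
    obtain ⟨w, hadj, hw⟩ := aux_closer G hc hya
    have hw' : G.dist a w = G.dist a x := by
      rw [SimpleGraph.dist_comm] at hw
      rw [SimpleGraph.dist_comm (u := a) (v := y)] at h
      omega
    have : w = x := hinj w x hw'
    exact (this ▸ hadj).symm
  constructor
  · rintro (h | h)
    · exact key x y h
    · exact (key y x h).symm
  · intro hadj
    have hd1 : G.dist a y ≤ G.dist a x + 1 := by
      have := hc.dist_triangle (u := a) (v := x) (w := y)
      have h3 : G.dist x y = 1 := SimpleGraph.dist_eq_one_iff_adj.mpr hadj
      omega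
    have hd2 : G.dist a x ≤ G.dist a y + 1 := by
      have := hc.dist_triangle (u := a) (v := y) (w := x)
      have h3 : G.dist y x = 1 := SimpleGraph.dist_eq_one_iff_adj.mpr hadj.symm
      omega
    have hdne : G.dist a x ≠ G.dist a y := by
      intro h
      exact G.irrefl (hinj x y h ▸ hadj)
    have hxv : (f x : ℕ) = G.dist a x := rfl
    have hyv : (f y : ℕ) = G.dist a y := rfl
    have hxv' : ((Equiv.ofBijective f ⟨hfinj, hfsurj⟩ x : Fin (M + 1)) : ℕ) = G.dist a x := rfl
    have hyv' : ((Equiv.ofBijective f ⟨hfinj, hfsurj⟩ y : Fin (M + 1)) : ℕ) = G.dist a y := rfl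
    omega
end

section
/- If G is a finite tree (a finite connected simple graph with no cycles) with at least two vertices, then the Steinerberger boundary ∂G is exactly the set of vertices of degree 1. -/
/-!
A leaf lies in the boundary, witnessed by its neighbour. Conversely, in a tree every neighbour `w`
of `v` has `d(w,u) = d(v,u) ± 1`, and at most one of them is closer to `u`, since two such would
give two distinct paths from `v` to `u`. Hence if `deg v ≥ 2`, then
`Σ_{w ∈ N(v)} d(w,u) ≥ (d(v,u) - 1) + (deg v - 1)(d(v,u) + 1) ≥ deg v · d(v,u)`.
-/

open Finset

variable {V : Type*}

namespace SimpleGraph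

variable {G : SimpleGraph V}

lemma Walk.notMem_support_of_length_eq_dist {u v w : V} (p : G.Walk w u)
    (hp : p.length = G.dist w u) (hvw : v ≠ w) (hd : G.dist w u ≤ G.dist v u) :
    v ∉ p.support := by
  classical
  exact fun hv => (G.dist_le (p.dropUntil v hv)).not_gt <|
    hd.trans_lt' (hp ▸ Walk.length_dropUntil_lt_length hv hvw)

lemma IsTree.eq_of_adj_of_dist_le (ht : G.IsTree) {u v w₁ w₂ : V}
    (h₁ : G.Adj v w₁) (h₂ : G.Adj v w₂)
    (hd₁ : G.dist w₁ u ≤ G.dist v u) (hd₂ : G.dist w₂ u ≤ G.dist v u) : w₁ = w₂ := by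
  obtain ⟨p₁, hp₁, hl₁⟩ := ht.connected.exists_path_of_dist w₁ u
  obtain ⟨p₂, hp₂, hl₂⟩ := ht.connected.exists_path_of_dist w₂ u
  have hq₁ : (Walk.cons h₁ p₁).IsPath := (Walk.cons_isPath_iff h₁ p₁).mpr
    ⟨hp₁, p₁.notMem_support_of_length_eq_dist hl₁ h₁.ne hd₁⟩
  have hq₂ : (Walk.cons h₂ p₂).IsPath := (Walk.cons_isPath_iff h₂ p₂).mpr
    ⟨hp₂, p₂.notMem_support_of_length_eq_dist hl₂ h₂.ne hd₂⟩
  simpa using congrArg (·.getVert 1) ((ht.existsUnique_path v u).unique hq₁ hq₂)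

variable [Fintype V] [DecidableRel G.Adj]

lemma IsTree.degree_mul_dist_le_sum_dist (ht : G.IsTree) {v : V} (hv : G.degree v ≠ 1) (u : V) :
    G.degree v * G.dist v u ≤ ∑ w ∈ G.neighborFinset v, G.dist w u := by
  classical
  set d := G.dist v u
  by_cases hclose : ∃ w₀ ∈ G.neighborFinset v, G.dist w₀ u ≤ d
  · obtain ⟨w₀, hw₀, hd₀⟩ := hclose
    rw [mem_neighborFinset] at hw₀
    have hfar : ∀ w ∈ (G.neighborFinset v).erase w₀, d + 1 ≤ G.dist w u := by
      intro w hw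
      obtain ⟨hne, hw⟩ := mem_erase.mp hw
      by_contra! hlt
      exact hne (ht.eq_of_adj_of_dist_le ((G.mem_neighborFinset v w).mp hw) hw₀
        (Nat.le_of_lt_succ hlt) hd₀)
    obtain ⟨k, hk⟩ : ∃ k, G.degree v = k + 2 := by
      have := G.degree_pos_iff_exists_adj v |>.mpr ⟨w₀, hw₀⟩
      exact ⟨G.degree v - 2, by omega⟩
    have hcard : ((G.neighborFinset v).erase w₀).card = k + 1 := by
      rw [card_erase_of_mem ((G.mem_neighborFinset v w₀).mpr hw₀), card_neighborFinset_eq_degree]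
      omega
    suffices G.degree v * d + 1 ≤ ∑ w ∈ G.neighborFinset v, G.dist w u + 1 by omega
    calc G.degree v * d + 1 ≤ d + (k + 1) * (d + 1) := by rw [hk]; nlinarith
      _ ≤ (G.dist w₀ u + 1) + ∑ w ∈ (G.neighborFinset v).erase w₀, G.dist w u := by
          gcongr
          · have := ht.dist_eq_dist_add_one_of_adj u hw₀
            simp only [G.dist_comm (u := u)] at this
            omega
          · exact hcard ▸ card_nsmul_le_sum _ _ _ hfar
      _ = ∑ w ∈ G.neighborFinset v, G.dist w u + 1 := by
          rw [add_right_comm, add_sum_erase _ (G.dist · u) ((G.mem_neighborFinset v w₀).mpr hw₀)]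
  · push Not at hclose
    rw [← card_neighborFinset_eq_degree]
    exact card_nsmul_le_sum _ _ _ fun w hw => (hclose w hw).le

lemma exists_sum_dist_lt_of_degree_eq_one {v : V} (hv : G.degree v = 1) :
    ∃ u, ∑ w ∈ G.neighborFinset v, G.dist w u < G.degree v * G.dist v u := by
  obtain ⟨w, hw⟩ := card_eq_one.mp ((G.card_neighborFinset_eq_degree v).trans hv)
  have hadj : G.Adj v w := (G.mem_neighborFinset v w).mp (hw ▸ mem_singleton_self w)
  refine ⟨w, ?_⟩
  simp [hw, hv, dist_eq_one_iff_adj.mpr hadj]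

end SimpleGraph

theorem sBoundary_of_tree [Fintype V] (G : SimpleGraph V) [DecidableRel G.Adj]
    (ht : G.IsTree) (h2 : 2 ≤ Fintype.card V) :
    sBoundary G = {v : V | G.degree v = 1} := by
  rw [sBoundary, if_neg (by omega)]
  ext v
  refine ⟨fun ⟨u, hu⟩ => ?_, G.exists_sum_dist_lt_of_degree_eq_one⟩
  by_contra hv
  exact (ht.degree_mul_dist_le_sum_dist hv u).not_gt hu
end

section
/- Let G be a finite connected simple graph and let v be a vertex with deg(v) = 2. Then v belongs to the Steinerberger boundary ∂G if and only if there exists a cycle in G that contains v. -/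
open Finset

variable {V : Type*}

private lemma lemA {G : SimpleGraph V} (hc : G.Connected) {v a b : V}
    (hva : G.Adj v a) (hvb : G.Adj v b) (hN : ∀ w, G.Adj v w → w = a ∨ w = b)
    {u : V} (huv : u ≠ v) : G.dist v u = 1 + min (G.dist a u) (G.dist b u) := by
  have hda : G.dist v a = 1 := SimpleGraph.dist_eq_one_iff_adj.mpr hva
  have hdb : G.dist v b = 1 := SimpleGraph.dist_eq_one_iff_adj.mpr hvb
  have ta : G.dist v u ≤ 1 + G.dist a u := by
    have := hc.dist_triangle (u := v) (v := a) (w := u); omega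
  have tb : G.dist v u ≤ 1 + G.dist b u := by
    have := hc.dist_triangle (u := v) (v := b) (w := u); omega
  obtain ⟨p, hp⟩ := (hc.preconnected v u).exists_walk_length_eq_dist
  cases p with
  | nil => exact absurd rfl huv.symm
  | @cons _ w _ h t =>
    rw [SimpleGraph.Walk.length_cons] at hp
    have hle := SimpleGraph.dist_le t
    rcases hN w h with rfl | rfl <;> omega

private lemma ivt {G : SimpleGraph V} (f : V → ℤ)
    (hstep : ∀ ⦃x y : V⦄, G.Adj x y → f y ≤ f x + 2) :
    ∀ {a b : V} (p : G.Walk a b), f a ≤ 1 → -1 ≤ f b →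
      ∃ u ∈ p.support, -1 ≤ f u ∧ f u ≤ 1 := by
  intro a b p
  induction p with
  | nil => intro h1 h2; exact ⟨_, by simp, h2, h1⟩
  | @cons x y _ h t ih =>
    intro h1 h2
    by_cases hfa : -1 ≤ f x
    · exact ⟨x, SimpleGraph.Walk.start_mem_support _, hfa, h1⟩
    · push_neg at hfa
      obtain ⟨u, hu, hu1, hu2⟩ := ih (by have := hstep h; omega) h2
      exact ⟨u, by simp [hu], hu1, hu2⟩

private lemma boundary_of_walk {G : SimpleGraph V} (hc : G.Connected) {v a b : V}
    (hva : G.Adj v a) (hvb : G.Adj v b) (hN : ∀ w, G.Adj v w → w = a ∨ w = b)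
    (s : G.Walk a b) (hs : v ∉ s.support) :
    ∃ u, G.dist a u + G.dist b u < 2 * G.dist v u := by
  have hstep : ∀ ⦃x y : V⦄, G.Adj x y →
      ((G.dist a y : ℤ) - G.dist b y) ≤ ((G.dist a x : ℤ) - G.dist b x) + 2 := by
    intro x y hxy
    have h1 : G.dist a y ≤ G.dist a x + 1 := by
      have := hc.dist_triangle (u := a) (v := x) (w := y)
      have := SimpleGraph.dist_eq_one_iff_adj.mpr hxy
      omega
    have h2 : G.dist b x ≤ G.dist b y + 1 := by
      have := hc.dist_triangle (u := b) (v := y) (w := x)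
      have := SimpleGraph.dist_eq_one_iff_adj.mpr hxy.symm
      omega
    -- cast
    omega
  obtain ⟨u, hu, h1, h2⟩ := ivt (fun u => (G.dist a u : ℤ) - G.dist b u) hstep s
    (by simp [SimpleGraph.dist_self]) (by simp [SimpleGraph.dist_self])
  have huv : u ≠ v := fun h => hs (h ▸ hu)
  have hmin := lemA hc hva hvb hN huv
  refine ⟨u, ?_⟩
  omega

private lemma cycle_of_u {G : SimpleGraph V} (hc : G.Connected) {v a b u : V}
    (hva : G.Adj v a) (hvb : G.Adj v b) (hab : a ≠ b)
    (h1 : G.dist v u = 1 + G.dist a u) (h2 : G.dist b u ≤ G.dist a u + 1) :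
    ∃ (x : V) (c : G.Walk x x), c.IsCycle ∧ v ∈ c.support := by
  classical
  have hdav : G.dist a v = 1 := SimpleGraph.dist_eq_one_iff_adj.mpr hva.symm
  have hdbv : G.dist b v = 1 := SimpleGraph.dist_eq_one_iff_adj.mpr hvb.symm
  obtain ⟨P, hP⟩ := (hc.preconnected a u).exists_walk_length_eq_dist
  obtain ⟨Q, hQ⟩ := (hc.preconnected b u).exists_walk_length_eq_dist
  have hvP : v ∉ P.support := by
    intro hvp
    have t1 := SimpleGraph.dist_le (P.takeUntil v hvp)
    have t2 := SimpleGraph.dist_le (P.dropUntil v hvp)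
    have t3 : (P.takeUntil v hvp).length + (P.dropUntil v hvp).length = P.length := by
      rw [← SimpleGraph.Walk.length_append, SimpleGraph.Walk.take_spec]
    omega
  have hvQ : v ∉ Q.support := by
    intro hvq
    have t1 := SimpleGraph.dist_le (Q.takeUntil v hvq)
    have t2 := SimpleGraph.dist_le (Q.dropUntil v hvq)
    have t3 : (Q.takeUntil v hvq).length + (Q.dropUntil v hvq).length = Q.length := by
      rw [← SimpleGraph.Walk.length_append, SimpleGraph.Walk.take_spec]
    omega
  set W : G.Walk a b := P.append Q.reverse with hW
  have hvW : v ∉ W.support := by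
    rw [hW, SimpleGraph.Walk.mem_support_append_iff, SimpleGraph.Walk.support_reverse]
    simp only [List.mem_reverse]
    tauto
  set p : G.Walk a b := W.bypass with hp
  have hpath : p.IsPath := W.bypass_isPath
  have hvp : v ∉ p.support := fun h => hvW (W.support_bypass_subset h)
  set q : G.Walk a v := p.append (SimpleGraph.Walk.cons hvb.symm SimpleGraph.Walk.nil) with hq
  refine ⟨v, SimpleGraph.Walk.cons hva q, ?_, SimpleGraph.Walk.start_mem_support _⟩
  rw [SimpleGraph.Walk.cons_isCycle_iff]
  constructor
  · rw [SimpleGraph.Walk.isPath_def, hq, SimpleGraph.Walk.support_append]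
    simp only [SimpleGraph.Walk.support_cons, SimpleGraph.Walk.support_nil, List.tail_cons]
    rw [List.nodup_append]
    exact ⟨hpath.support_nodup, List.nodup_singleton v,
      by intro x hx y hy hxy; rw [List.mem_singleton] at hy; subst hxy; exact hvp (hy ▸ hx)⟩
  · rw [hq, SimpleGraph.Walk.edges_append]
    simp only [SimpleGraph.Walk.edges_cons, SimpleGraph.Walk.edges_nil, List.mem_append,
      List.mem_singleton, not_or]
    constructor
    · intro h
      exact hvp (p.fst_mem_support_of_mem_edges h)
    · intro h
      rw [Sym2.eq_iff] at h
      rcases h with ⟨h1', h2'⟩ | ⟨h1', h2'⟩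
      · exact hvb.ne h1'
      · exact hab h2'

theorem degree_two_mem_sBoundary_iff_cycle [Fintype V] (G : SimpleGraph V)
    [DecidableRel G.Adj] (hc : G.Connected) (v : V) (hv : G.degree v = 2) :
    v ∈ sBoundary G ↔ ∃ (u : V) (c : G.Walk u u), c.IsCycle ∧ v ∈ c.support := by
  classical
  obtain ⟨a, b, hab, hN⟩ := Finset.card_eq_two.mp
    (by rw [← hv]; rfl : (G.neighborFinset v).card = 2)
  have hva : G.Adj v a := by
    rw [← SimpleGraph.mem_neighborFinset, hN]; simp
  have hvb : G.Adj v b := by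
    rw [← SimpleGraph.mem_neighborFinset, hN]; simp
  have hN' : ∀ w, G.Adj v w → w = a ∨ w = b := fun w hw => by
    have hm : w ∈ G.neighborFinset v := (SimpleGraph.mem_neighborFinset G v w).mpr hw
    rw [hN] at hm; simpa using hm
  have hcard : Fintype.card V ≠ 1 := by
    intro h
    exact hab (Fintype.card_le_one_iff.mp h.le a b)
  rw [sBoundary, if_neg hcard]
  simp only [Set.mem_setOf_eq, hN, hv, Finset.sum_pair hab]
  constructor
  · rintro ⟨u, hu⟩
    have huv : u ≠ v := by
      rintro rfl
      rw [SimpleGraph.dist_eq_one_iff_adj.mpr hva.symm,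
        SimpleGraph.dist_eq_one_iff_adj.mpr hvb.symm, SimpleGraph.dist_self] at hu
      omega
    have hmin := lemA hc hva hvb hN' huv
    rcases le_total (G.dist a u) (G.dist b u) with h | h
    · exact cycle_of_u hc hva hvb hab (u := u) (by omega) (by omega)
    · exact cycle_of_u hc hvb hva hab.symm (u := u) (by omega) (by omega)
  · rintro ⟨u₀, c, hcyc, hvc⟩
    have hd : (c.rotate v hvc).IsCycle := hcyc.rotate hvc
    obtain ⟨x, hvx, t, ht⟩ : ∃ (x : V) (hvx : G.Adj v x) (t : G.Walk x v),
        c.rotate v hvc = SimpleGraph.Walk.cons hvx t := by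
      cases hw : c.rotate v hvc with
      | nil => rw [hw] at hd; exact absurd rfl hd.ne_nil
      | cons h t => exact ⟨_, h, t, rfl⟩
    rw [ht, SimpleGraph.Walk.cons_isCycle_iff] at hd
    obtain ⟨htp, hte⟩ := hd
    cases ht2 : t.reverse with
    | nil => exact absurd hvx (G.loopless.irrefl v)
    | @cons _ y _ hvy s =>
      have hsvy : s(v, y) ∈ t.edges := by
        have hm : s(v, y) ∈ t.reverse.edges := by rw [ht2]; simp
        rwa [SimpleGraph.Walk.edges_reverse, List.mem_reverse] at hm
      have hxy : x ≠ y := by rintro rfl; exact hte hsvy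
      have hnd : t.reverse.support.Nodup := by
        rw [SimpleGraph.Walk.support_reverse]
        exact List.nodup_reverse.mpr htp.support_nodup
      rw [ht2, SimpleGraph.Walk.support_cons] at hnd
      have hvs : v ∉ s.support := (List.nodup_cons.mp hnd).1
      rcases hN' x hvx with rfl | rfl <;> rcases hN' y hvy with rfl | rfl
      · exact absurd rfl hxy
      · exact boundary_of_walk hc hva hvb hN' s.reverse
          (by simpa [SimpleGraph.Walk.support_reverse] using hvs)
      · exact boundary_of_walk hc hva hvb hN' s hvs
      · exact absurd rfl hxy
end

section
/- Let G be a finite connected simple graph and let v be a vertex with deg(v) = 2.ice Then v is either a vertex of the Steinerberger boundary ∂G or a cut vertex of G (i.e. deleting v disconnects G). -/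
/-!
Let `a, b` be the two neighbours of `v`. If `v` is not in the boundary, then
`2 d(v,u) ≤ d(a,u) + d(b,u)` for every `u`. For `u ≠ v`, a geodesic from `v` to `u` leaves
through one neighbour, which is therefore one step closer to `u`, while the other is at most one
step farther; so `|d(a,u) - d(b,u)| = 2`. Along an edge avoiding `v` the difference
`d(a,·) - d(b,·)` moves by at most `2`, so its sign is constant on each component of `G - v`.
It is negative at `a` and positive at `b`, hence `a` and `b` lie in different components.
-/

open Finset

variable {V : Type*}

/-- A vertex of a connected graph is a cut vertex if deleting it (and all incident edges)
leaves a graph that is not connected. -/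
def IsCutVertex (G : SimpleGraph V) (v : V) : Prop :=
  ¬ (G.induce {w : V | w ≠ v}).Connected

namespace SimpleGraph

variable {G : SimpleGraph V} {a b u v : V}

theorem Reachable.exists_adj_dist_add_one_eq (h : G.Reachable v u) (hne : v ≠ u) :
    ∃ w, G.Adj v w ∧ G.dist w u + 1 = G.dist v u := by
  obtain ⟨p, hp⟩ := h.exists_walk_length_eq_dist
  cases p with
  | nil => exact absurd rfl hne
  | cons hadj q =>
    refine ⟨_, hadj, le_antisymm ?_ ?_⟩
    · rw [← hp, Walk.length_cons]
      exact Nat.add_le_add_right (dist_le q) 1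
    · have := hadj.reachable.dist_triangle_left u
      rwa [dist_eq_one_iff_adj.mpr hadj, add_comm] at this

theorem dist_add_two_le_or_of_two_mul_dist_le (hr : G.Reachable v u) (hne : v ≠ u)
    (hva : G.Adj v a) (hvb : G.Adj v b) (hN : ∀ w, G.Adj v w → w = a ∨ w = b)
    (hmid : 2 * G.dist v u ≤ G.dist a u + G.dist b u) :
    G.dist a u + 2 ≤ G.dist b u ∨ G.dist b u + 2 ≤ G.dist a u := by
  obtain ⟨w, hvw, hw⟩ := hr.exists_adj_dist_add_one_eq hne
  have ha := hva.diff_dist_adj (u := u)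
  have hb := hvb.diff_dist_adj (u := u)
  simp only [dist_comm (u := u)] at ha hb
  rcases hN w hvw with rfl | rfl <;> omega

theorem not_reachable_induce_ne_of_two_mul_dist_le (hc : G.Connected)
    (hva : G.Adj v a) (hvb : G.Adj v b) (hN : ∀ w, G.Adj v w → w = a ∨ w = b)
    (hmid : ∀ u, 2 * G.dist v u ≤ G.dist a u + G.dist b u) :
    ¬ (G.induce {w | w ≠ v}).Reachable ⟨a, hva.ne.symm⟩ ⟨b, hvb.ne.symm⟩ := by
  have gap (u : V) (hu : u ≠ v) :=
    dist_add_two_le_or_of_two_mul_dist_le (hc v u) hu.symm hva hvb hN (hmid u)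
  rintro ⟨p⟩
  obtain ⟨d, -, hx, hy⟩ := p.exists_boundary_dart {x | G.dist a x + 2 ≤ G.dist b x}
    (by simpa using gap a hva.ne.symm) (by simp)
  have ha := (induce_adj.mp d.adj).diff_dist_adj (u := a)
  have hb := (induce_adj.mp d.adj).diff_dist_adj (u := b)
  have := gap d.snd d.snd.2
  rw [Set.mem_ofPred] at hx hy
  omega

end SimpleGraph

theorem two_mul_dist_le_of_notMem_sBoundary [Fintype V] [DecidableEq V] {G : SimpleGraph V}
    [DecidableRel G.Adj] {a b v : V} (hab : a ≠ b) (hN : G.neighborFinset v = {a, b})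
    (hv : v ∉ sBoundary G) (u : V) :
    2 * G.dist v u ≤ G.dist a u + G.dist b u := by
  have hcard : Fintype.card V ≠ 1 := (Fintype.one_lt_card_iff.mpr ⟨a, b, hab⟩).ne'
  have hdeg : G.degree v = 2 := by
    rw [← G.card_neighborFinset_eq_degree, hN, card_pair hab]
  refine not_lt.mp fun hlt => hv ?_
  rw [sBoundary, if_neg hcard]
  exact ⟨u, by rwa [hN, sum_pair hab, hdeg]⟩

theorem degree_two_boundary_or_cut [Fintype V] (G : SimpleGraph V)
    [DecidableRel G.Adj] (hc : G.Connected) (v : V) (hv : G.degree v = 2) :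
    v ∈ sBoundary G ∨ IsCutVertex G v := by
  classical
  refine or_iff_not_imp_left.mpr fun hB hconn => ?_
  rw [← G.card_neighborFinset_eq_degree, card_eq_two] at hv
  obtain ⟨a, b, hab, hN⟩ := hv
  have hadj (w : V) : G.Adj v w ↔ w = a ∨ w = b := by
    rw [← G.mem_neighborFinset, hN, mem_insert, mem_singleton]
  exact SimpleGraph.not_reachable_induce_ne_of_two_mul_dist_le hc
    ((hadj a).mpr (.inl rfl)) ((hadj b).mpr (.inr rfl)) (fun w => (hadj w).mp)
    (two_mul_dist_le_of_notMem_sBoundary hab hN hB) (hconn.preconnected _ _)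
end

section
/- Let G₁ be a finite connected simple graph on vertex set V₁ with at least two vertices, let v₁ ∈ V₁, let G₂ be a finite connected simple graph on a vertex set V₂ disjoint from V₁, and let v₂ ∈ V₂. Let G be the graph on V₁ ∪ V₂ whose edges are those of G₁, those of G₂, together with the single edge (v₁, v₂). Then β_G(v₁) = β_{G₁}(v₁) − 1. -/
open Finset

variable {V : Type*}

/-- `betaAt G v u = Σ_{w ∈ N(v)} (d(v,u) − d(w,u))`, computed in the integers. -/
noncomputable def betaAt (G : SimpleGraph V) [Fintype V] [DecidableRel G.Adj] (v u : V) : ℤ :=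
  ∑ w ∈ G.neighborFinset v, ((G.dist v u : ℤ) - (G.dist w u : ℤ))

/-- The boundary stability number `β_G(v) = max_{u ∈ V} β_G(v,u)`. -/
noncomputable def beta (G : SimpleGraph V) [Fintype V] [Nonempty V] [DecidableRel G.Adj]
    (v : V) : ℤ :=
  Finset.univ.sup' Finset.univ_nonempty (betaAt G v)

/-- The graph on `V₁ ⊕ V₂` obtained from the disjoint union of `G₁` and `G₂` by adding the
single edge between `v₁` and `v₂`. -/
def joinGraph {V₁ V₂ : Type*} (G₁ : SimpleGraph V₁) (G₂ : SimpleGraph V₂) (v₁ : V₁)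
    (v₂ : V₂) : SimpleGraph (V₁ ⊕ V₂) where
  Adj x y :=
    (∃ a b, x = Sum.inl a ∧ y = Sum.inl b ∧ G₁.Adj a b) ∨
    (∃ a b, x = Sum.inr a ∧ y = Sum.inr b ∧ G₂.Adj a b) ∨
    (x = Sum.inl v₁ ∧ y = Sum.inr v₂) ∨
    (x = Sum.inr v₂ ∧ y = Sum.inl v₁)
  symm := by
    constructor
    rintro x y (⟨a, b, rfl, rfl, h⟩ | ⟨a, b, rfl, rfl, h⟩ | ⟨rfl, rfl⟩ | ⟨rfl, rfl⟩)
    · exact Or.inl ⟨b, a, rfl, rfl, h.symm⟩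
    · exact Or.inr (Or.inl ⟨b, a, rfl, rfl, h.symm⟩)
    · exact Or.inr (Or.inr (Or.inr ⟨rfl, rfl⟩))
    · exact Or.inr (Or.inr (Or.inl ⟨rfl, rfl⟩))
  loopless := by
    constructor
    rintro x (⟨a, b, h1, h2, h⟩ | ⟨a, b, h1, h2, h⟩ | ⟨h1, h2⟩ | ⟨h1, h2⟩)
    · subst h1; injection h2 with h2; subst h2; exact G₁.loopless.irrefl _ h
    · subst h1; injection h2 with h2; subst h2; exact G₂.loopless.irrefl _ h
    · subst h1; simp at h2
    · subst h1; simp at h2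

noncomputable instance {V₁ V₂ : Type*} {G₁ : SimpleGraph V₁} {G₂ : SimpleGraph V₂}
    {v₁ : V₁} {v₂ : V₂} : DecidableRel (joinGraph G₁ G₂ v₁ v₂).Adj :=
  Classical.decRel _

instance {α β : Type*} [Nonempty α] : Nonempty (α ⊕ β) :=
  ⟨Sum.inl (Classical.arbitrary α)⟩

section Aux

variable {V₁ V₂ : Type*} (G₁ : SimpleGraph V₁) (G₂ : SimpleGraph V₂) (v₁ : V₁) (v₂ : V₂)

/-- The candidate distance function on the join graph. -/
noncomputable def jD : V₁ ⊕ V₂ → V₁ ⊕ V₂ → ℕ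
  | Sum.inl a, Sum.inl b => G₁.dist a b
  | Sum.inl a, Sum.inr b => G₁.dist a v₁ + 1 + G₂.dist v₂ b
  | Sum.inr a, Sum.inl b => G₂.dist a v₂ + 1 + G₁.dist v₁ b
  | Sum.inr a, Sum.inr b => G₂.dist a b

variable {G₁ G₂ v₁ v₂}

lemma adjLL {a b : V₁} (h : G₁.Adj a b) :
    (joinGraph G₁ G₂ v₁ v₂).Adj (Sum.inl a) (Sum.inl b) := Or.inl ⟨a, b, rfl, rfl, h⟩

lemma adjRR {a b : V₂} (h : G₂.Adj a b) :
    (joinGraph G₁ G₂ v₁ v₂).Adj (Sum.inr a) (Sum.inr b) := Or.inr (Or.inl ⟨a, b, rfl, rfl, h⟩)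

lemma adjLR : (joinGraph G₁ G₂ v₁ v₂).Adj (Sum.inl v₁) (Sum.inr v₂) :=
  Or.inr (Or.inr (Or.inl ⟨rfl, rfl⟩))

lemma adjRL : (joinGraph G₁ G₂ v₁ v₂).Adj (Sum.inr v₂) (Sum.inl v₁) :=
  Or.inr (Or.inr (Or.inr ⟨rfl, rfl⟩))

/-- `Sum.inl` as a graph homomorphism into the join graph. -/
abbrev homL : G₁ →g joinGraph G₁ G₂ v₁ v₂ := ⟨Sum.inl, fun h => adjLL h⟩

/-- `Sum.inr` as a graph homomorphism into the join graph. -/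
abbrev homR : G₂ →g joinGraph G₁ G₂ v₁ v₂ := ⟨Sum.inr, fun h => adjRR h⟩

variable (hc₁ : G₁.Connected) (hc₂ : G₂.Connected)

include hc₁ hc₂ in
lemma exists_walk_jD (x y : V₁ ⊕ V₂) :
    ∃ w : (joinGraph G₁ G₂ v₁ v₂).Walk x y, w.length = jD G₁ G₂ v₁ v₂ x y := by
  cases x with
  | inl a =>
    cases y with
    | inl b =>
      obtain ⟨p, hp⟩ := hc₁.exists_walk_length_eq_dist a b
      exact ⟨p.map homL, by simpa [jD, SimpleGraph.Walk.length_map] using hp⟩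
    | inr b =>
      obtain ⟨p, hp⟩ := hc₁.exists_walk_length_eq_dist a v₁
      obtain ⟨q, hq⟩ := hc₂.exists_walk_length_eq_dist v₂ b
      refine ⟨(p.map homL).append (SimpleGraph.Walk.cons adjLR (q.map homR)), ?_⟩
      simp [jD, hp, hq, SimpleGraph.Walk.length_map]; omega
  | inr a =>
    cases y with
    | inl b =>
      obtain ⟨p, hp⟩ := hc₂.exists_walk_length_eq_dist a v₂
      obtain ⟨q, hq⟩ := hc₁.exists_walk_length_eq_dist v₁ b
      refine ⟨(p.map homR).append (SimpleGraph.Walk.cons adjRL (q.map homL)), ?_⟩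
      simp [jD, hp, hq, SimpleGraph.Walk.length_map]; omega
    | inr b =>
      obtain ⟨q, hq⟩ := hc₂.exists_walk_length_eq_dist a b
      exact ⟨q.map homR, by simpa [jD, SimpleGraph.Walk.length_map] using hq⟩

include hc₁ hc₂ in
lemma jD_step {x x' : V₁ ⊕ V₂} (h : (joinGraph G₁ G₂ v₁ v₂).Adj x x') (y : V₁ ⊕ V₂) :
    jD G₁ G₂ v₁ v₂ x y ≤ jD G₁ G₂ v₁ v₂ x' y + 1 := by
  have t₁ : ∀ a b c : V₁, G₁.Adj a b → G₁.dist a c ≤ G₁.dist b c + 1 := by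
    intro a b c hab
    have := hc₁.dist_triangle (u := a) (v := b) (w := c)
    rw [SimpleGraph.dist_eq_one_iff_adj.mpr hab] at this
    omega
  have t₂ : ∀ a b c : V₂, G₂.Adj a b → G₂.dist a c ≤ G₂.dist b c + 1 := by
    intro a b c hab
    have := hc₂.dist_triangle (u := a) (v := b) (w := c)
    rw [SimpleGraph.dist_eq_one_iff_adj.mpr hab] at this
    omega
  rcases h with ⟨a, b, rfl, rfl, hab⟩ | ⟨a, b, rfl, rfl, hab⟩ | ⟨rfl, rfl⟩ | ⟨rfl, rfl⟩ <;>
    cases y <;> simp only [jD, SimpleGraph.dist_self]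
  · exact t₁ _ _ _ hab
  · have := t₁ _ _ v₁ hab; omega
  · have := t₂ _ _ v₂ hab; omega
  · exact t₂ _ _ _ hab
  · omega
  · omega
  · omega
  · omega

include hc₁ hc₂ in
lemma jD_le_length : ∀ {x y : V₁ ⊕ V₂} (p : (joinGraph G₁ G₂ v₁ v₂).Walk x y),
    jD G₁ G₂ v₁ v₂ x y ≤ p.length := by
  intro x y p
  induction p with
  | nil => rename_i u; cases u <;> simp [jD]
  | cons h p ih =>
    calc jD G₁ G₂ v₁ v₂ _ _ ≤ jD G₁ G₂ v₁ v₂ _ _ + 1 := jD_step hc₁ hc₂ h _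
    _ ≤ p.length + 1 := by omega
    _ = (SimpleGraph.Walk.cons h p).length := (SimpleGraph.Walk.length_cons _ _).symm

include hc₁ hc₂ in
lemma joinGraph_dist (x y : V₁ ⊕ V₂) :
    (joinGraph G₁ G₂ v₁ v₂).dist x y = jD G₁ G₂ v₁ v₂ x y := by
  obtain ⟨w, hw⟩ := exists_walk_jD hc₁ hc₂ x y
  refine le_antisymm (hw ▸ SimpleGraph.dist_le w) ?_
  obtain ⟨p, hp⟩ := SimpleGraph.Reachable.exists_walk_length_eq_dist
    (⟨w⟩ : (joinGraph G₁ G₂ v₁ v₂).Reachable x y)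
  exact hp ▸ jD_le_length hc₁ hc₂ p

lemma joinGraph_neighborFinset [Fintype V₁] [Fintype V₂] [DecidableRel G₁.Adj]
    [DecidableEq (V₁ ⊕ V₂)] :
    (joinGraph G₁ G₂ v₁ v₂).neighborFinset (Sum.inl v₁) =
      insert (Sum.inr v₂) ((G₁.neighborFinset v₁).image Sum.inl) := by
  ext x
  simp only [SimpleGraph.mem_neighborFinset, Finset.mem_insert, Finset.mem_image]
  constructor
  · rintro (⟨a, b, ha, rfl, hab⟩ | ⟨a, b, ha, rfl, hab⟩ | ⟨-, rfl⟩ | ⟨ha, -⟩)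
    · injection ha with ha; subst ha
      exact Or.inr ⟨b, by simpa [SimpleGraph.mem_neighborFinset] using hab, rfl⟩
    · exact absurd ha (by simp)
    · exact Or.inl rfl
    · exact absurd ha (by simp)
  · rintro (rfl | ⟨b, hb, rfl⟩)
    · exact adjLR
    · exact adjLL (by simpa [SimpleGraph.mem_neighborFinset] using hb)

end Aux

theorem beta_joinGraph_left_attach {V₁ V₂ : Type*} [Fintype V₁] [Fintype V₂]
    [Nonempty V₁] [Nonempty V₂]
    (G₁ : SimpleGraph V₁) (G₂ : SimpleGraph V₂) [DecidableRel G₁.Adj]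
    (hc₁ : G₁.Connected) (hc₂ : G₂.Connected) (h2 : 2 ≤ Fintype.card V₁)
    (v₁ : V₁) (v₂ : V₂) :
    beta (joinGraph G₁ G₂ v₁ v₂) (Sum.inl v₁) = beta G₁ v₁ - 1 := by
  haveI := Classical.decEq (V₁ ⊕ V₂)
  haveI := Classical.decEq V₁
  set J := joinGraph G₁ G₂ v₁ v₂ with hJ
  have hdist := joinGraph_dist (G₁ := G₁) (G₂ := G₂) (v₁ := v₁) (v₂ := v₂) hc₁ hc₂
  have hinj : Function.Injective (Sum.inl : V₁ → V₁ ⊕ V₂) := Sum.inl_injective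
  have hnotmem : (Sum.inr v₂ : V₁ ⊕ V₂) ∉ (G₁.neighborFinset v₁).image Sum.inl := by
    simp
  -- betaAt at a left vertex
  have hbetaL : ∀ u : V₁, betaAt J (Sum.inl v₁) (Sum.inl u) = betaAt G₁ v₁ u - 1 := by
    intro u
    rw [betaAt, joinGraph_neighborFinset, Finset.sum_insert hnotmem,
      Finset.sum_image (fun a _ b _ h => hinj h)]
    have h1 : (J.dist (Sum.inl v₁) (Sum.inl u) : ℤ) - (J.dist (Sum.inr v₂) (Sum.inl u) : ℤ)
        = -1 := by
      rw [hdist, hdist]; simp [jD, SimpleGraph.dist_self]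
    rw [h1]
    have h2 : ∀ a ∈ G₁.neighborFinset v₁,
        (J.dist (Sum.inl v₁) (Sum.inl u) : ℤ) - (J.dist (Sum.inl a) (Sum.inl u) : ℤ)
        = (G₁.dist v₁ u : ℤ) - (G₁.dist a u : ℤ) := by
      intro a _; rw [hdist, hdist]; simp [jD]
    rw [Finset.sum_congr rfl h2, betaAt]; ring
  -- betaAt at a right vertex
  have hbetaR : ∀ u : V₂, betaAt J (Sum.inl v₁) (Sum.inr u) = 1 - (G₁.degree v₁ : ℤ) := by
    intro u
    rw [betaAt, joinGraph_neighborFinset, Finset.sum_insert hnotmem,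
      Finset.sum_image (fun a _ b _ h => hinj h)]
    have h1 : (J.dist (Sum.inl v₁) (Sum.inr u) : ℤ) - (J.dist (Sum.inr v₂) (Sum.inr u) : ℤ)
        = 1 := by
      rw [hdist, hdist]; simp [jD, SimpleGraph.dist_self]
    rw [h1]
    have h2 : ∀ a ∈ G₁.neighborFinset v₁,
        (J.dist (Sum.inl v₁) (Sum.inr u) : ℤ) - (J.dist (Sum.inl a) (Sum.inr u) : ℤ)
        = -1 := by
      intro a ha
      rw [SimpleGraph.mem_neighborFinset] at ha
      rw [hdist, hdist]
      simp only [jD, SimpleGraph.dist_self]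
      rw [SimpleGraph.dist_comm (u := a), SimpleGraph.dist_eq_one_iff_adj.mpr ha]
      push_cast; ring
    rw [Finset.sum_congr rfl h2, Finset.sum_const, SimpleGraph.card_neighborFinset_eq_degree]
    ring
  -- β₁(v₁) ≥ 2 − deg v₁
  have hkey : 2 - (G₁.degree v₁ : ℤ) ≤ beta G₁ v₁ := by
    obtain ⟨u, hu⟩ := Fintype.exists_ne_of_one_lt_card (by omega) v₁
    obtain ⟨p⟩ := hc₁ v₁ u
    obtain ⟨x, hx⟩ : ∃ x, G₁.Adj v₁ x := by
      cases p with
      | nil => exact absurd rfl hu.symm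
      | cons h _ => exact ⟨_, h⟩
    have hxmem : x ∈ G₁.neighborFinset v₁ := (SimpleGraph.mem_neighborFinset _ _ _).mpr hx
    have hb : 2 - (G₁.degree v₁ : ℤ) ≤ betaAt G₁ v₁ x := by
      have hstep : ∀ w ∈ G₁.neighborFinset v₁,
          (if w = x then (1 : ℤ) else -1) ≤ (G₁.dist v₁ x : ℤ) - (G₁.dist w x : ℤ) := by
        intro w hw
        rw [SimpleGraph.mem_neighborFinset] at hw
        rw [SimpleGraph.dist_eq_one_iff_adj.mpr hx]
        by_cases hwx : w = x
        · subst hwx; simp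
        · have htr := hc₁.dist_triangle (u := w) (v := v₁) (w := x)
          rw [SimpleGraph.dist_comm (u := w) (v := v₁),
            SimpleGraph.dist_eq_one_iff_adj.mpr hw,
            SimpleGraph.dist_eq_one_iff_adj.mpr hx] at htr
          simp only [if_neg hwx]
          have : (G₁.dist w x : ℤ) ≤ 2 := by exact_mod_cast htr
          omega
      have hsum : ∑ w ∈ G₁.neighborFinset v₁, (if w = x then (1 : ℤ) else -1)
          = 2 - (G₁.degree v₁ : ℤ) := by
        have : ∀ w : V₁, (if w = x then (1 : ℤ) else -1)
            = (if w = x then (2 : ℤ) else 0) + (-1) := by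
          intro w; by_cases h : w = x <;> simp [h]
        rw [Finset.sum_congr rfl fun w _ => this w, Finset.sum_add_distrib,
          Finset.sum_ite_eq' _ x, if_pos hxmem, Finset.sum_const,
          SimpleGraph.card_neighborFinset_eq_degree]
        ring
      calc 2 - (G₁.degree v₁ : ℤ)
          = ∑ w ∈ G₁.neighborFinset v₁, (if w = x then (1 : ℤ) else -1) := hsum.symm
        _ ≤ betaAt G₁ v₁ x := Finset.sum_le_sum hstep
    exact le_trans hb (Finset.le_sup' _ (Finset.mem_univ x))
  -- conclude
  apply le_antisymm
  · apply Finset.sup'_le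
    rintro (u | u) -
    · rw [hbetaL u]
      have h : betaAt G₁ v₁ u ≤ beta G₁ v₁ := Finset.le_sup' _ (Finset.mem_univ u)
      omega
    · rw [hbetaR u]; omega
  · obtain ⟨u, -, hu⟩ := Finset.exists_mem_eq_sup' (Finset.univ_nonempty (α := V₁))
      (betaAt G₁ v₁)
    calc beta G₁ v₁ - 1 = betaAt G₁ v₁ u - 1 := by rw [beta, hu]
      _ = betaAt J (Sum.inl v₁) (Sum.inl u) := (hbetaL u).symm
      _ ≤ _ := Finset.le_sup' _ (Finset.mem_univ _)
end

section
/- Let G be a finite connected simple graph. Then |∂G| = 2 if and only if G is a path graph with at least two vertices. -/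
open Finset

variable {V : Type*}

open SimpleGraph

section AuxLemmas

variable {W : Type*}

private lemma iso_dist_le {G : SimpleGraph V} {H : SimpleGraph W} (e : G ≃g H) (u v : V) :
    H.dist (e u) (e v) ≤ G.dist u v := by
  by_cases h : G.Reachable u v
  · obtain ⟨p, hp⟩ := h.exists_walk_length_eq_dist
    calc H.dist (e u) (e v) ≤ (p.map e.toHom).length := SimpleGraph.dist_le _
    _ = p.length := p.length_map _
    _ = G.dist u v := hp
  · have h' : ¬ H.Reachable (e u) (e v) := by
      intro ⟨q⟩
      exact h ⟨(q.map e.symm.toHom).copy (by simp) (by simp)⟩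
    rw [SimpleGraph.dist_eq_zero_of_not_reachable h,
      SimpleGraph.dist_eq_zero_of_not_reachable h']

private lemma iso_dist {G : SimpleGraph V} {H : SimpleGraph W} (e : G ≃g H) (u v : V) :
    H.dist (e u) (e v) = G.dist u v := by
  refine le_antisymm (iso_dist_le e u v) ?_
  have := iso_dist_le e.symm (e u) (e v)
  simpa using this

private lemma pathGraph_adj_natDist {n : ℕ} {u v : Fin n} (h : (pathGraph n).Adj u v) :
    Nat.dist u.val v.val = 1 := by
  rw [pathGraph_adj] at h
  rcases h with h | h <;> simp [Nat.dist] <;> omega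

private lemma pathGraph_dist_lower {n : ℕ} {u v : Fin n} (p : (pathGraph n).Walk u v) :
    Nat.dist u.val v.val ≤ p.length := by
  induction p with
  | nil => simp [Nat.dist_self]
  | @cons x y z h q ih =>
    have h1 := pathGraph_adj_natDist h
    have h2 := Nat.dist.triangle_inequality x.val y.val z.val
    simp only [SimpleGraph.Walk.length_cons]
    omega

private lemma pathGraph_dist_upper {n : ℕ} (d : ℕ) {u v : Fin n} (h : v.val = u.val + d) :
    (pathGraph n).dist u v ≤ d := by
  induction d generalizing u with
  | zero =>
    have : u = v := by ext; omega
    subst this; simp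
  | succ d ih =>
    have hn : u.val + 1 < n := by omega
    set u' : Fin n := ⟨u.val + 1, hn⟩ with hu'
    have hadj : (pathGraph n).Adj u u' := by rw [pathGraph_adj]; left; rfl
    have h1 : (pathGraph n).dist u u' = 1 := SimpleGraph.dist_eq_one_iff_adj.mpr hadj
    have hconn : (pathGraph n).Connected := by
      obtain ⟨m, rfl⟩ : ∃ m, n = m + 1 := ⟨n - 1, by omega⟩
      exact pathGraph_connected m
    calc (pathGraph n).dist u v ≤ _ + _ := hconn.dist_triangle (v := u')
    _ ≤ 1 + d := by have := ih (u := u') (by simp [hu']; omega); omega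
    _ ≤ d + 1 := by omega

private lemma pathGraph_dist {n : ℕ} (u v : Fin n) :
    (pathGraph n).dist u v = Nat.dist u.val v.val := by
  refine le_antisymm ?_ ?_
  · rcases le_total u.val v.val with h | h
    · have := pathGraph_dist_upper (v.val - u.val) (u := u) (v := v) (by omega)
      rwa [Nat.dist_eq_sub_of_le h]
    · have := pathGraph_dist_upper (u.val - v.val) (u := v) (v := u) (by omega)
      rw [Nat.dist_comm]
      rw [SimpleGraph.dist_comm]
      rwa [Nat.dist_eq_sub_of_le h]
  · have hconn : (pathGraph n).Connected := by
      obtain ⟨m, rfl⟩ : ∃ m, n = m + 1 := ⟨n - 1, by have := u.pos; omega⟩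
      exact pathGraph_connected m
    obtain ⟨p, hp⟩ := hconn.exists_walk_length_eq_dist u v
    rw [← hp]
    exact pathGraph_dist_lower p

private lemma mem_sBoundary_iff {G : SimpleGraph V} [Fintype V] [DecidableRel G.Adj]
    (hcard : Fintype.card V ≠ 1) (v : V) :
    v ∈ sBoundary G ↔ ∃ u : V, ∑ w ∈ G.neighborFinset v, G.dist w u < G.degree v * G.dist v u := by
  rw [sBoundary, if_neg hcard]; rfl

/-- first step of a geodesic -/
private lemma exists_adj_dist_pred {G : SimpleGraph V} (hc : G.Connected) {v u : V} (h : v ≠ u) :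
    ∃ w, G.Adj v w ∧ G.dist v u = G.dist w u + 1 := by
  have hpos : 0 < G.dist v u := hc.pos_dist_of_ne h
  obtain ⟨p, hp⟩ := hc.exists_walk_length_eq_dist v u
  cases p with
  | nil => simp at hp; exact absurd rfl h
  | @cons x y z hadj q =>
    refine ⟨y, hadj, ?_⟩
    have h1 : G.dist y u ≤ q.length := SimpleGraph.dist_le q
    have h2 : G.dist v u ≤ G.dist v y + G.dist y u := hc.dist_triangle
    have h3 : G.dist v y ≤ 1 := by
      rw [show (1 : ℕ) = SimpleGraph.Walk.length (SimpleGraph.Walk.cons hadj SimpleGraph.Walk.nil) by simp]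
      exact SimpleGraph.dist_le _
    simp only [SimpleGraph.Walk.length_cons] at hp
    omega

private lemma adj_dist_le {G : SimpleGraph V} (hc : G.Connected) {v w : V} (h : G.Adj v w) (u : V) :
    G.dist w u ≤ G.dist v u + 1 := by
  have h2 : G.dist w u ≤ G.dist w v + G.dist v u := hc.dist_triangle
  have h3 : G.dist w v = 1 := SimpleGraph.dist_eq_one_iff_adj.mpr h.symm
  omega

private lemma localmax_mem_sBoundary {G : SimpleGraph V} [Fintype V] [DecidableRel G.Adj]
    (hc : G.Connected) (hcard : Fintype.card V ≠ 1) {v u : V} (hne : v ≠ u)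
    (h : ∀ w, G.Adj v w → G.dist w u ≤ G.dist v u) : v ∈ sBoundary G := by
  rw [mem_sBoundary_iff hcard]
  refine ⟨u, ?_⟩
  obtain ⟨w0, hw0, hd0⟩ := exists_adj_dist_pred hc hne
  have hmem : w0 ∈ G.neighborFinset v := by rwa [SimpleGraph.mem_neighborFinset]
  have : ∑ w ∈ G.neighborFinset v, G.dist w u < ∑ w ∈ G.neighborFinset v, G.dist v u := by
    refine Finset.sum_lt_sum (fun i hi => h i (by rwa [SimpleGraph.mem_neighborFinset] at hi)) ⟨w0, hmem, ?_⟩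
    omega
  rw [Finset.sum_const, smul_eq_mul] at this
  exact this

private lemma exists_adj_dist_succ {G : SimpleGraph V} [Fintype V] [DecidableRel G.Adj]
    (hc : G.Connected) (hcard : Fintype.card V ≠ 1) {v : V} (hv : v ∉ sBoundary G)
    {u : V} (hne : v ≠ u) :
    ∃ w, G.Adj v w ∧ G.dist w u = G.dist v u + 1 := by
  by_contra hcon
  push_neg at hcon
  refine hv (localmax_mem_sBoundary hc hcard hne fun w hw => ?_)
  have := hcon w hw
  have := adj_dist_le hc hw u
  omega

private lemma dist_lt_card {G : SimpleGraph V} [Fintype V] (hc : G.Connected) (u v : V) :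
    G.dist u v < Fintype.card V := by
  obtain ⟨p, hp, hl⟩ := hc.exists_path_of_dist u v
  rw [← hl]
  exact hp.length_lt

private lemma chain_aux {G : SimpleGraph V} [Fintype V] [DecidableRel G.Adj]
    (hc : G.Connected) (hcard : Fintype.card V ≠ 1) {a b : V}
    (hB : sBoundary G = {a, b}) :
    ∀ (N : ℕ) (v u : V), Fintype.card V - G.dist u v ≤ N → v ≠ a → v ≠ b → u ≠ v →
      G.dist u a = G.dist u v + G.dist v a ∨ G.dist u b = G.dist u v + G.dist v b := by
  intro N
  induction N with
  | zero =>
    intro v u hN _ _ _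
    have := dist_lt_card hc u v
    omega
  | succ N ih =>
    intro v u hN hva hvb huv
    have hv : v ∉ sBoundary G := by
      rw [hB]; simp [hva, hvb]
    obtain ⟨w, hadj, hdw⟩ := exists_adj_dist_succ hc hcard hv (Ne.symm huv)
    rw [SimpleGraph.dist_comm (u := w)] at hdw
    rw [SimpleGraph.dist_comm (u := v)] at hdw
    by_cases hwa : w = a
    · left
      rw [hwa] at hdw hadj
      have h1 : G.dist v a = 1 := SimpleGraph.dist_eq_one_iff_adj.mpr hadj
      omega
    by_cases hwb : w = b
    · right
      rw [hwb] at hdw hadj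
      have h1 : G.dist v b = 1 := SimpleGraph.dist_eq_one_iff_adj.mpr hadj
      omega
    · have huw : u ≠ w := by
        intro h
        rw [h, SimpleGraph.dist_self] at hdw
        omega
      have hrec := ih w u (by omega) hwa hwb huw
      have hvw : G.dist v w = 1 := SimpleGraph.dist_eq_one_iff_adj.mpr hadj
      have t1 : G.dist u a ≤ G.dist u v + G.dist v a := hc.dist_triangle
      have t2 : G.dist u b ≤ G.dist u v + G.dist v b := hc.dist_triangle
      have t3 : G.dist v a ≤ G.dist v w + G.dist w a := hc.dist_triangle
      have t4 : G.dist v b ≤ G.dist v w + G.dist w b := hc.dist_triangle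
      rcases hrec with h | h
      · left; omega
      · right; omega

private theorem forward_dir {G : SimpleGraph V} [Fintype V] [DecidableRel G.Adj]
    (hc : G.Connected) (h2 : (sBoundary G).ncard = 2) :
    IsPathGraph G ∧ 2 ≤ Fintype.card V := by
  have hne : Nonempty V := hc.nonempty
  have hpos : 1 ≤ Fintype.card V := Fintype.card_pos
  have hcard : Fintype.card V ≠ 1 := by
    intro h1
    rw [sBoundary, if_pos h1, Set.ncard_univ, Nat.card_eq_fintype_card, h1] at h2
    omega
  obtain ⟨a, b, hab, hB⟩ := Set.ncard_eq_two.mp h2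
  have chain : ∀ v u : V, v ≠ a → v ≠ b → u ≠ v →
      G.dist u a = G.dist u v + G.dist v a ∨ G.dist u b = G.dist u v + G.dist v b :=
    fun v u hva hvb huv =>
      chain_aux hc hcard hB (Fintype.card V) v u (by omega) hva hvb huv
  have key : ∀ v : V, G.dist a v + G.dist v b = G.dist a b := by
    intro v
    by_cases hva : v = a
    · rw [hva, SimpleGraph.dist_self]; simp
    by_cases hvb : v = b
    · rw [hvb, SimpleGraph.dist_self]; simp
    · rcases chain v b hva hvb (fun h => hvb h.symm) with h | h
      · have c1 : G.dist b a = G.dist a b := SimpleGraph.dist_comm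
        have c2 : G.dist b v = G.dist v b := SimpleGraph.dist_comm
        have c3 : G.dist v a = G.dist a v := SimpleGraph.dist_comm
        omega
      · rw [SimpleGraph.dist_self] at h
        have h0 : G.dist b v = 0 := by omega
        exact absurd ((hc.dist_eq_zero_iff).mp h0).symm hvb
  have inj : ∀ u v : V, G.dist a u = G.dist a v → u = v := by
    intro u v h
    by_cases huv : u = v
    · exact huv
    by_cases hva : v = a
    · rw [hva, SimpleGraph.dist_self] at h
      rw [hva]
      exact (hc.dist_eq_zero_iff).mp (by rw [SimpleGraph.dist_comm]; exact h)
    by_cases hvb : v = b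
    · rw [hvb] at h ⊢
      have k1 := key u
      have k2 : G.dist u b = 0 := by omega
      exact (hc.dist_eq_zero_iff).mp k2
    · exfalso
      rcases chain v u hva hvb huv with hd | hd
      · have c1 : G.dist u a = G.dist a u := SimpleGraph.dist_comm
        have c2 : G.dist v a = G.dist a v := SimpleGraph.dist_comm
        have h0 : G.dist u v = 0 := by omega
        exact huv ((hc.dist_eq_zero_iff).mp h0)
      · have k1 := key u
        have k2 := key v
        have c1 : G.dist u b = G.dist b u := SimpleGraph.dist_comm
        have c2 : G.dist b u = G.dist u b := SimpleGraph.dist_comm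
        have h0 : G.dist u v = 0 := by omega
        exact huv ((hc.dist_eq_zero_iff).mp h0)
  set D := G.dist a b with hD
  have hD1 : 1 ≤ D := hc.pos_dist_of_ne hab
  have hDle : ∀ v : V, G.dist a v ≤ D := fun v => by have := key v; omega
  have up : ∀ v : V, G.dist a v < D → ∃ w, G.Adj v w ∧ G.dist a w = G.dist a v + 1 := by
    intro v hv
    have hvb : v ≠ b := by
      intro h; rw [h] at hv; omega
    obtain ⟨w, hadj, hd⟩ := exists_adj_dist_pred hc hvb
    refine ⟨w, hadj, ?_⟩
    have k1 := key v
    have k2 := key w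
    omega
  have surj : ∀ k : ℕ, k ≤ D → ∃ v, G.dist a v = k := by
    intro k
    induction k with
    | zero => exact fun _ => ⟨a, SimpleGraph.dist_self⟩
    | succ k ih =>
      intro hk
      obtain ⟨v, hv⟩ := ih (by omega)
      obtain ⟨w, _, hw⟩ := up v (by omega)
      exact ⟨w, by omega⟩
  have hbij : Function.Bijective (fun v : V => (⟨G.dist a v, by have := hDle v; omega⟩ : Fin (D+1))) := by
    constructor
    · intro u v h
      exact inj u v (by simpa using congrArg Fin.val h)
    · rintro ⟨k, hk⟩
      obtain ⟨v, hv⟩ := surj k (by omega)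
      exact ⟨v, by simp [hv]⟩
  set φ := fun v : V => (⟨G.dist a v, by have := hDle v; omega⟩ : Fin (D+1)) with hφ
  have adj_iff : ∀ u v : V, (pathGraph (D+1)).Adj (φ u) (φ v) ↔ G.Adj u v := by
    intro u v
    rw [pathGraph_adj]
    simp only [hφ]
    constructor
    · rintro (h | h)
      · obtain ⟨w, hadj, hw⟩ := up u (by have := hDle v; omega)
        have : w = v := inj w v (by omega)
        rwa [this] at hadj
      · obtain ⟨w, hadj, hw⟩ := up v (by have := hDle u; omega)
        have : w = u := inj w u (by omega)
        rw [this] at hadj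
        exact hadj.symm
    · intro h
      have h1 : G.dist u v = 1 := SimpleGraph.dist_eq_one_iff_adj.mpr h
      have t1 : G.dist a v ≤ G.dist a u + G.dist u v := hc.dist_triangle
      have t2 : G.dist a u ≤ G.dist a v + G.dist v u := hc.dist_triangle
      have t3 : G.dist v u = 1 := SimpleGraph.dist_eq_one_iff_adj.mpr h.symm
      have t4 : G.dist a u ≠ G.dist a v := fun heq => h.ne (inj u v heq)
      omega
  refine ⟨⟨D + 1, ⟨⟨Equiv.ofBijective φ hbij, ?_⟩⟩⟩, ?_⟩
  · intro u v
    exact adj_iff u v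
  · have : Fintype.card V = D + 1 := by
      rw [Fintype.card_of_bijective hbij, Fintype.card_fin]
    omega

section Transfer

variable {G : SimpleGraph V} {H : SimpleGraph W} [Fintype V] [Fintype W]
  [DecidableRel G.Adj] [DecidableRel H.Adj]

private lemma iso_neighborFinset (e : G ≃g H) (v : V) :
    H.neighborFinset (e v) = (G.neighborFinset v).map e.toEquiv.toEmbedding := by
  ext w
  simp only [SimpleGraph.mem_neighborFinset, Finset.mem_map, Equiv.coe_toEmbedding]
  constructor
  · intro h
    refine ⟨e.symm w, ?_, by simp⟩
    have := e.symm.map_adj_iff.mpr h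
    simpa using this
  · rintro ⟨x, hx, rfl⟩
    exact e.map_adj_iff.mpr hx

private lemma iso_degree (e : G ≃g H) (v : V) : H.degree (e v) = G.degree v := by
  unfold SimpleGraph.degree
  rw [iso_neighborFinset e v, Finset.card_map]

private lemma iso_mem_sBoundary (e : G ≃g H) (v : V) :
    v ∈ sBoundary G ↔ e v ∈ sBoundary H := by
  have hcards : Fintype.card V = Fintype.card W := Fintype.card_congr e.toEquiv
  unfold sBoundary
  by_cases h1 : Fintype.card V = 1
  · rw [if_pos h1, if_pos (hcards ▸ h1)]; simp
  · rw [if_neg h1, if_neg (hcards ▸ h1)]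
    simp only [Set.mem_setOf_eq]
    constructor
    · rintro ⟨u, hu⟩
      refine ⟨e u, ?_⟩
      rw [iso_neighborFinset e v, Finset.sum_map, iso_degree e v, iso_dist e v u]
      simp only [Equiv.coe_toEmbedding, RelIso.coe_fn_toEquiv, iso_dist e]
      exact hu
    · rintro ⟨u, hu⟩
      refine ⟨e.symm u, ?_⟩
      rw [iso_neighborFinset e v, Finset.sum_map, iso_degree e v] at hu
      simp only [Equiv.coe_toEmbedding, RelIso.coe_fn_toEquiv] at hu
      have hr : e (e.symm u) = u := e.apply_symm_apply u
      have h2 : ∀ x : V, H.dist (e x) u = G.dist x (e.symm u) := by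
        intro x
        conv_lhs => rw [← hr]
        rw [iso_dist e]
      simp only [h2] at hu
      exact hu

private lemma iso_sBoundary (e : G ≃g H) : sBoundary G = e.symm '' sBoundary H := by
  ext v
  rw [iso_mem_sBoundary e v]
  constructor
  · intro h; exact ⟨e v, h, by simp⟩
  · rintro ⟨w, hw, rfl⟩; simpa using hw

private lemma iso_sBoundary_ncard (e : G ≃g H) :
    (sBoundary G).ncard = (sBoundary H).ncard := by
  rw [iso_sBoundary e]
  exact Set.ncard_image_of_injective _ e.symm.injective

end Transfer

private lemma natdist_def (a b : ℕ) : Nat.dist a b = a - b + (b - a) := rfl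

private lemma sBoundary_pathGraph {n : ℕ} (hn : 2 ≤ n)
    [inst : DecidableRel (SimpleGraph.pathGraph n).Adj] :
    sBoundary (SimpleGraph.pathGraph n)
      = {(⟨0, by omega⟩ : Fin n), (⟨n - 1, by omega⟩ : Fin n)} := by
  have hcard : Fintype.card (Fin n) ≠ 1 := by simp; omega
  ext v
  rw [mem_sBoundary_iff hcard]
  by_cases h0 : v.val = 0
  · have hv : v = ⟨0, by omega⟩ := by ext; exact h0
    rw [hv]
    simp only [Set.mem_insert_iff, Set.mem_singleton_iff]
    constructor
    · intro _; exact Or.inl trivial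
    · intro _
      refine ⟨⟨n - 1, by omega⟩, ?_⟩
      have hN : (SimpleGraph.pathGraph n).neighborFinset ⟨0, by omega⟩ = {⟨1, by omega⟩} := by
        ext w
        simp only [SimpleGraph.mem_neighborFinset, Finset.mem_singleton, pathGraph_adj]
        rw [Fin.ext_iff]
        simp only []
        omega
      rw [hN, Finset.sum_singleton, SimpleGraph.degree, hN, Finset.card_singleton,
        pathGraph_dist, pathGraph_dist]
      simp only [natdist_def]
      omega
  · by_cases h1 : v.val = n - 1
    · have hv : v = ⟨n - 1, by omega⟩ := by ext; exact h1
      rw [hv]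
      simp only [Set.mem_insert_iff, Set.mem_singleton_iff]
      constructor
      · intro _; exact Or.inr trivial
      · intro _
        refine ⟨⟨0, by omega⟩, ?_⟩
        have hN : (SimpleGraph.pathGraph n).neighborFinset ⟨n - 1, by omega⟩
            = {⟨n - 2, by omega⟩} := by
          ext w
          simp only [SimpleGraph.mem_neighborFinset, Finset.mem_singleton, pathGraph_adj]
          rw [Fin.ext_iff]
          simp only []
          have := w.isLt
          omega
        rw [hN, Finset.sum_singleton, SimpleGraph.degree, hN, Finset.card_singleton,
          pathGraph_dist, pathGraph_dist]
        simp only [natdist_def]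
        omega
    · -- interior vertex
      have hvk0 : 0 < v.val := by omega
      have hvk1 : v.val < n - 1 := by have := v.isLt; omega
      have hne : (⟨v.val - 1, by omega⟩ : Fin n) ≠ ⟨v.val + 1, by omega⟩ := by
        intro h
        rw [Fin.ext_iff] at h
        simp only [] at h
        omega
      have hN : (SimpleGraph.pathGraph n).neighborFinset v
          = {⟨v.val - 1, by omega⟩, ⟨v.val + 1, by omega⟩} := by
        ext w
        simp only [SimpleGraph.mem_neighborFinset, Finset.mem_insert, Finset.mem_singleton,
          pathGraph_adj]
        rw [Fin.ext_iff, Fin.ext_iff]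
        simp only []
        omega
      constructor
      · rintro ⟨u, hu⟩
        exfalso
        rw [hN, Finset.sum_pair hne, SimpleGraph.degree, hN, Finset.card_pair hne,
          pathGraph_dist, pathGraph_dist, pathGraph_dist] at hu
        simp only [natdist_def] at hu
        omega
      · intro h
        exfalso
        simp only [Set.mem_insert_iff, Set.mem_singleton_iff, Fin.ext_iff] at h
        rcases h with h | h <;> omega

end AuxLemmas

theorem sBoundary_card_two_iff [Fintype V] (G : SimpleGraph V) [DecidableRel G.Adj]
    (hc : G.Connected) :
    (sBoundary G).ncard = 2 ↔ (IsPathGraph G ∧ 2 ≤ Fintype.card V) := by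
  constructor
  · exact forward_dir hc
  · rintro ⟨⟨n, ⟨e⟩⟩, hcard2⟩
    haveI : DecidableRel (SimpleGraph.pathGraph n).Adj := Classical.decRel _
    have hn : n = Fintype.card V := by
      rw [Fintype.card_congr e.toEquiv, Fintype.card_fin]
    have hn2 : 2 ≤ n := by omega
    rw [iso_sBoundary_ncard e, sBoundary_pathGraph hn2]
    rw [Set.ncard_pair]
    intro h
    rw [Fin.ext_iff] at h
    simp only [] at h
    omega
end

section
/- Let G be a finite simple graph on vertex set V with at least two vertices whose minimum degree satisfies δ(G) ≥ (|V| − 1)/2 (equivalently, 2·δ(G) ≥ |V| − 1); such a graph is necessarily connected of diameter at most 2. If G has exactly one vertex u of eccentricity 1, then ∂G = V \ {u}; otherwise ∂G = V. -/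
open Finset

variable {V : Type*}

/-- The eccentricity of a vertex: the maximum distance to another vertex. -/
noncomputable def ecc (G : SimpleGraph V) [Fintype V] (v : V) : ℕ :=
  Finset.univ.sup fun w => G.dist v w

/-- The diameter of a graph: the maximum eccentricity. -/
noncomputable def gdiam (G : SimpleGraph V) [Fintype V] : ℕ :=
  Finset.univ.sup fun v => ecc G v

theorem sBoundary_of_large_minDegree [Fintype V] (G : SimpleGraph V) [DecidableRel G.Adj]
    (h2 : 2 ≤ Fintype.card V) (hδ : Fintype.card V - 1 ≤ 2 * G.minDegree) :
    G.Connected ∧ gdiam G ≤ 2 ∧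
    ((∃! u : V, ecc G u = 1) → ∀ u : V, ecc G u = 1 → sBoundary G = {w : V | w ≠ u}) ∧
    (¬ (∃! u : V, ecc G u = 1) → sBoundary G = Set.univ) := by
  classical
  have hne : Nonempty V := Fintype.card_pos_iff.mp (by omega)
  -- common neighbor lemma
  have hcn : ∀ u v : V, u ≠ v → ¬ G.Adj u v → ∃ w, G.Adj u w ∧ G.Adj v w := by
    intro u v huv hadj
    by_contra hno
    push_neg at hno
    have hdisj : Disjoint (G.neighborFinset u) (G.neighborFinset v) := by
      rw [Finset.disjoint_left]
      intro w hwu hwv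
      exact hno w (by simpa using hwu) (by simpa using hwv)
    have hsub : G.neighborFinset u ∪ G.neighborFinset v ⊆ univ \ {u, v} := by
      intro w hw
      simp only [Finset.mem_union, SimpleGraph.mem_neighborFinset] at hw
      simp only [Finset.mem_sdiff, Finset.mem_univ, Finset.mem_insert, Finset.mem_singleton,
        true_and]
      push_neg
      rcases hw with hw | hw
      · exact ⟨fun h => G.irrefl (h ▸ hw), fun h => hadj (h ▸ hw)⟩
      · exact ⟨fun h => hadj (G.adj_symm (h ▸ hw)), fun h => G.irrefl (h ▸ hw)⟩
    have hcard : (G.neighborFinset u ∪ G.neighborFinset v).card =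
        G.degree u + G.degree v := by
      rw [Finset.card_union_of_disjoint hdisj]; rfl
    have h1 : G.degree u + G.degree v ≤ (univ \ ({u, v} : Finset V)).card := by
      rw [← hcard]; exact Finset.card_le_card hsub
    have h3 : (univ \ ({u, v} : Finset V)).card = Fintype.card V - 2 := by
      rw [Finset.card_sdiff_of_subset (Finset.subset_univ _), Finset.card_univ,
        Finset.card_pair huv]
    have h4 := G.minDegree_le_degree u
    have h5 := G.minDegree_le_degree v
    omega
  have hconn : G.Connected := by
    rw [SimpleGraph.connected_iff]
    refine ⟨fun u v => ?_, hne⟩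
    by_cases h : u = v
    · exact h ▸ SimpleGraph.Reachable.refl u
    by_cases ha : G.Adj u v
    · exact ha.reachable
    · obtain ⟨w, h1, hw2⟩ := hcn u v h ha
      exact h1.reachable.trans hw2.reachable.symm
  have hd2 : ∀ u v : V, G.dist u v ≤ 2 := by
    intro u v
    by_cases h : u = v
    · simp [h, SimpleGraph.dist_self]
    by_cases ha : G.Adj u v
    · rw [SimpleGraph.dist_eq_one_iff_adj.mpr ha]; omega
    · obtain ⟨w, h1, hw2⟩ := hcn u v h ha
      calc G.dist u v ≤ G.dist u w + G.dist w v := hconn.dist_triangle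
        _ = 2 := by
          rw [SimpleGraph.dist_eq_one_iff_adj.mpr h1, SimpleGraph.dist_comm,
            SimpleGraph.dist_eq_one_iff_adj.mpr hw2]
  have hecc_le : ∀ v, ecc G v ≤ 2 := fun v => Finset.sup_le fun w _ => hd2 v w
  have hdle : ∀ v w : V, G.dist v w ≤ ecc G v := fun v w =>
    Finset.le_sup (Finset.mem_univ w)
  have hecc_pos : ∀ v, 1 ≤ ecc G v := by
    intro v
    obtain ⟨w, hw⟩ := Fintype.exists_ne_of_one_lt_card (by omega) v
    calc 1 ≤ G.dist v w := hconn.pos_dist_of_ne (Ne.symm hw)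
      _ ≤ ecc G v := hdle v w
  have hecc1 : ∀ v, ecc G v = 1 ↔ ∀ w, w ≠ v → G.Adj v w := by
    intro v
    constructor
    · intro h w hw
      have h1 := hdle v w
      rw [h] at h1
      have := hconn.pos_dist_of_ne (Ne.symm hw)
      exact SimpleGraph.dist_eq_one_iff_adj.mp (by omega)
    · intro h
      refine le_antisymm (Finset.sup_le fun w _ => ?_) (hecc_pos v)
      by_cases hw : w = v
      · simp [hw, SimpleGraph.dist_self]
      · rw [SimpleGraph.dist_eq_one_iff_adj.mpr (h w hw)]
  have hecc2 : ∀ v, ecc G v ≠ 1 → ∃ u, G.dist v u = 2 := by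
    intro v h
    have h2' : ecc G v = 2 := by have := hecc_le v; have := hecc_pos v; omega
    obtain ⟨u, _, hu⟩ := Finset.exists_mem_eq_sup (univ : Finset V) Finset.univ_nonempty
      (fun w => G.dist v w)
    exact ⟨u, by rw [← hu]; exact h2'⟩
  -- neighbor finset of an eccentricity-1 vertex
  have hNfull : ∀ v, ecc G v = 1 → G.neighborFinset v = univ.erase v := by
    intro v hv
    ext w
    simp only [SimpleGraph.mem_neighborFinset, Finset.mem_erase, Finset.mem_univ, and_true]
    exact ⟨fun h => (G.ne_of_adj h).symm, fun h => (hecc1 v).mp hv w h⟩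
  have hdegfull : ∀ v, ecc G v = 1 → G.degree v = Fintype.card V - 1 := by
    intro v hv
    rw [SimpleGraph.degree, hNfull v hv, Finset.card_erase_of_mem (Finset.mem_univ v),
      Finset.card_univ]
  have hb : sBoundary G =
      {v | ∃ u : V, ∑ w ∈ G.neighborFinset v, G.dist w u < G.degree v * G.dist v u} := by
    rw [sBoundary, if_neg (by omega)]
  -- membership from a distance-2 vertex
  have hmem2 : ∀ v u : V, G.dist v u = 2 →
      ∃ u' : V, ∑ w ∈ G.neighborFinset v, G.dist w u' < G.degree v * G.dist v u' := by
    intro v u hvu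
    refine ⟨u, ?_⟩
    have hnevu : v ≠ u := by rintro rfl; simp [SimpleGraph.dist_self] at hvu
    have hadj : ¬ G.Adj v u := fun h => by
      rw [SimpleGraph.dist_eq_one_iff_adj.mpr h] at hvu; omega
    obtain ⟨w, hw1, hw2⟩ := hcn v u hnevu hadj
    have hlt : ∑ w' ∈ G.neighborFinset v, G.dist w' u <
        ∑ _w' ∈ G.neighborFinset v, 2 := by
      refine Finset.sum_lt_sum (fun i _ => hd2 i u) ⟨w, ?_, ?_⟩
      · simpa using hw1
      · rw [SimpleGraph.dist_comm, SimpleGraph.dist_eq_one_iff_adj.mpr hw2]; omega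
    calc ∑ w' ∈ G.neighborFinset v, G.dist w' u < ∑ _w' ∈ G.neighborFinset v, 2 := hlt
      _ = G.degree v * G.dist v u := by
        rw [Finset.sum_const, smul_eq_mul, hvu]; rfl
  -- membership for an ecc-1 vertex with another ecc-1 vertex
  have hmem1 : ∀ v u : V, v ≠ u → ecc G v = 1 → ecc G u = 1 →
      ∃ u' : V, ∑ w ∈ G.neighborFinset v, G.dist w u' < G.degree v * G.dist v u' := by
    intro v u hvu hv hu
    refine ⟨u, ?_⟩
    have hdvu : G.dist v u = 1 := SimpleGraph.dist_eq_one_iff_adj.mpr ((hecc1 v).mp hv u hvu.symm)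
    have humem : u ∈ univ.erase v := by simp [hvu.symm]
    have hsum : ∑ w ∈ G.neighborFinset v, G.dist w u =
        ∑ w ∈ (univ.erase v).erase u, G.dist w u := by
      rw [hNfull v hv, ← Finset.sum_erase_add _ _ humem, SimpleGraph.dist_self, add_zero]
    have hones : ∑ w ∈ (univ.erase v).erase u, G.dist w u =
        ((univ.erase v).erase u).card := by
      rw [Finset.card_eq_sum_ones]
      refine Finset.sum_congr rfl fun w hw => ?_
      simp only [Finset.mem_erase] at hw
      rw [SimpleGraph.dist_comm]
      exact SimpleGraph.dist_eq_one_iff_adj.mpr ((hecc1 u).mp hu w hw.1)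
    have hcard : ((univ.erase v).erase u).card = Fintype.card V - 2 := by
      rw [Finset.card_erase_of_mem humem, Finset.card_erase_of_mem (Finset.mem_univ v),
        Finset.card_univ]
      omega
    rw [hsum, hones, hcard, hdvu, hdegfull v hv]
    omega
  -- the unique ecc-1 vertex is not in the boundary
  have hnotmem : ∀ v, ecc G v = 1 → (∀ u, ecc G u = 1 → u = v) →
      ¬ ∃ u : V, ∑ w ∈ G.neighborFinset v, G.dist w u < G.degree v * G.dist v u := by
    rintro v hv huniq ⟨u, hu⟩
    by_cases hvu : u = v
    · rw [hvu, SimpleGraph.dist_self, mul_zero] at hu; omega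
    · have hud : ecc G u ≠ 1 := fun h => hvu (huniq u h)
      obtain ⟨z, hz⟩ := hecc2 u hud
      have hzu : z ≠ u := by rintro rfl; simp [SimpleGraph.dist_self] at hz
      have hadjvu : G.Adj v u := (hecc1 v).mp hv u hvu
      have hzv : z ≠ v := by
        rintro rfl
        rw [SimpleGraph.dist_comm, SimpleGraph.dist_eq_one_iff_adj.mpr hadjvu] at hz
        omega
      have humem : u ∈ univ.erase v := by simp [hvu]
      have hzmem : z ∈ (univ.erase v).erase u := by simp [Finset.mem_erase, hzu, hzv]
      have hsum : ∑ w ∈ G.neighborFinset v, G.dist w u =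
          ∑ w ∈ (univ.erase v).erase u, G.dist w u := by
        rw [hNfull v hv, ← Finset.sum_erase_add _ _ humem, SimpleGraph.dist_self, add_zero]
      have hlb : ∑ w ∈ (univ.erase v).erase u, 1 <
          ∑ w ∈ (univ.erase v).erase u, G.dist w u := by
        refine Finset.sum_lt_sum (fun i hi => ?_) ⟨z, hzmem, ?_⟩
        · simp only [Finset.mem_erase] at hi
          exact hconn.pos_dist_of_ne hi.1
        · rw [SimpleGraph.dist_comm, hz]; omega
      have hcard : ((univ.erase v).erase u).card = Fintype.card V - 2 := by
        rw [Finset.card_erase_of_mem humem, Finset.card_erase_of_mem (Finset.mem_univ v),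
          Finset.card_univ]
        omega
      rw [Finset.sum_const, smul_eq_mul, mul_one, hcard] at hlb
      rw [hsum, hdegfull v hv, SimpleGraph.dist_eq_one_iff_adj.mpr hadjvu, mul_one] at hu
      omega
  refine ⟨hconn, Finset.sup_le fun v _ => hecc_le v, ?_, ?_⟩
  · rintro ⟨u0, hu0, huniq0⟩ u hu
    have huu0 : u = u0 := huniq0 u hu
    rw [hb]
    ext w
    simp only [Set.mem_setOf_eq]
    constructor
    · rintro hw rfl
      exact hnotmem w hu (fun x hx => (huniq0 x hx).trans huu0.symm) hw
    · intro hw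
      have hwne1 : ecc G w ≠ 1 := fun h => hw ((huniq0 w h).trans huu0.symm)
      obtain ⟨z, hz⟩ := hecc2 w hwne1
      exact hmem2 w z hz
  · intro hnu
    rw [hb]
    ext v
    simp only [Set.mem_setOf_eq, Set.mem_univ, iff_true]
    by_cases hv : ecc G v = 1
    · have : ∃ u, ecc G u = 1 ∧ u ≠ v := by
        by_contra hc
        push_neg at hc
        exact hnu ⟨v, hv, fun x hx => hc x hx⟩
      obtain ⟨u, hu1, huv⟩ := this
      exact hmem1 v u huv.symm hv hu1
    · obtain ⟨z, hz⟩ := hecc2 v hv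
      exact hmem2 v z hz
end
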